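/- Fix n ≥ 1. For every element σ of the Houghton group H_n there is a unique vector (m₁(σ),…,m_n(σ)) ∈ ℤ^n of eventual translation amounts, and these satisfy m₁(σ)+⋯+m_n(σ) = 0. Moreover the map T : H_n → ℤ^n, T(σ) = (m₁(σ),…,m_n(σ)), is a group homomorphism whose kernel is exactly the subgroup of finitely supported elements of H_n, and whose image is exactly the sublattice {(v₁,…,v_n) ∈ ℤ^n : v₁+⋯+v_n = 0}. -/

import Mathlib

/-- A permutation `σ` of `Fin n × ℕ` is an *eventual translation* if there are integers
`m₁, …, m_n` and a finite set `F ⊆ Fin n × ℕ` such that `σ (i, k) = (i, k + mᵢ)` for all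
`(i, k) ∉ F`. -/
def IsEventualTranslation {n : ℕ} (σ : Equiv.Perm (Fin n × ℕ)) : Prop :=
  ∃ (m : Fin n → ℤ) (F : Finset (Fin n × ℕ)),
    ∀ p : Fin n × ℕ, p ∉ F →
      (σ p).1 = p.1 ∧ ((σ p).2 : ℤ) = (p.2 : ℤ) + m p.1

/-- The Houghton group `H_n`: the subgroup of `Equiv.Perm (Fin n × ℕ)` consisting of the
eventual translations. -/
def HoughtonGroup (n : ℕ) : Subgroup (Equiv.Perm (Fin n × ℕ)) where
  carrier := {σ | IsEventualTranslation σ}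
  one_mem' := ⟨0, ∅, fun p _ => by simp⟩
  mul_mem' := by
    rintro a b ⟨m, F, hF⟩ ⟨m', F', hF'⟩
    refine ⟨m + m', F' ∪ F.preimage b b.injective.injOn, fun p hp => ?_⟩
    simp only [Finset.mem_union, Finset.mem_preimage, not_or] at hp
    obtain ⟨hp1, hp2⟩ := hp
    obtain ⟨hb1, hb2⟩ := hF' p hp1
    obtain ⟨ha1, ha2⟩ := hF (b p) hp2
    refine ⟨by simp [Equiv.Perm.mul_apply, ha1, hb1], ?_⟩
    simp only [Equiv.Perm.mul_apply, Pi.add_apply]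
    rw [ha2, hb2, hb1]
    ring
  inv_mem' := by
    rintro a ⟨m, F, hF⟩
    refine ⟨-m, F.image a, fun p hp => ?_⟩
    have hmem : a⁻¹ p ∉ F := by
      intro h
      exact hp (Finset.mem_image.mpr ⟨a⁻¹ p, h, Equiv.apply_symm_apply a p⟩)
    obtain ⟨h1, h2⟩ := hF (a⁻¹ p) hmem
    rw [show a (a⁻¹ p) = p from Equiv.apply_symm_apply a p] at h1 h2
    refine ⟨h1.symm, ?_⟩
    rw [← h1] at h2
    simp only [Pi.neg_apply]
    omega

/-- `m : Fin n → ℤ` is a vector of eventual translation amounts for the permutation `σ`. -/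
def IsTranslationVector {n : ℕ} (σ : Equiv.Perm (Fin n × ℕ)) (m : Fin n → ℤ) : Prop :=
  ∃ F : Finset (Fin n × ℕ),
    ∀ p : Fin n × ℕ, p ∉ F →
      (σ p).1 = p.1 ∧ ((σ p).2 : ℤ) = (p.2 : ℤ) + m p.1

/-!
Each ray `{i} × ℕ` is infinite, so it is not swallowed by a finite exceptional set: this gives
uniqueness of the translation vector, and composing eventual translations gives additivity.
For the zero sum: for large `K`, `σ` maps the box `{(i, k) | k < K}` into the box
`{(i, k) | k < K + mᵢ}` and `σ⁻¹` maps it back, so both boxes have the same size,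
`n K = ∑ᵢ (K + mᵢ)`. Conversely, a zero-sum vector is an integer combination of the `eᵢ - eⱼ`,
and `eᵢ - eⱼ` is realised by gluing the rays `j` and `i` into a copy of `ℤ` and shifting by one.
-/

open Filter Finset

section LowerBox

variable {ι : Type*} [Fintype ι]

def lowerBox (c : ι → ℤ) : Finset (ι × ℕ) :=
  (univ.sigma fun i => range (c i).toNat).map (Equiv.sigmaEquivProd ι ℕ).toEmbedding

theorem mem_lowerBox {c : ι → ℤ} {p : ι × ℕ} : p ∈ lowerBox c ↔ (p.2 : ℤ) < c p.1 := by
  simp [lowerBox, Int.lt_toNat]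

theorem card_lowerBox (c : ι → ℤ) : #(lowerBox c) = ∑ i, (c i).toNat := by
  simp [lowerBox]

end LowerBox

theorem sum_smul_single_sub_single {ι R : Type*} [Fintype ι] [DecidableEq ι] [Ring R]
    (v : ι → R) (hv : ∑ i, v i = 0) (j : ι) :
    ∑ i, v i • (Pi.single i 1 - Pi.single j 1 : ι → R) = v := by
  simp only [smul_sub, sum_sub_distrib, ← sum_smul, hv, zero_smul, sub_zero]
  simp [← Pi.single_smul', univ_sum_single]

namespace IsTranslationVector

variable {n : ℕ} {σ τ : Equiv.Perm (Fin n × ℕ)} {m m' : Fin n → ℤ}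

theorem iff_eventually : IsTranslationVector σ m ↔
    ∀ᶠ p in cofinite, (σ p).1 = p.1 ∧ ((σ p).2 : ℤ) = p.2 + m p.1 := by
  rw [eventually_cofinite]
  constructor
  · rintro ⟨F, hF⟩
    exact F.finite_toSet.subset fun p hp => by_contra fun hpF => hp (hF p hpF)
  · intro hfin
    exact ⟨hfin.toFinset, fun p hp => by simpa using hp⟩

theorem unique (h : IsTranslationVector σ m) (h' : IsTranslationVector σ m') : m = m' := by
  funext i
  obtain ⟨k, ⟨-, hk⟩, ⟨-, hk'⟩⟩ := ((Prod.mk_right_injective i).tendsto_cofinite.eventually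
    ((iff_eventually.1 h).and (iff_eventually.1 h'))).exists
  dsimp only at hk hk'
  omega

theorem one : IsTranslationVector (1 : Equiv.Perm (Fin n × ℕ)) 0 :=
  ⟨∅, fun p _ => by simp⟩

theorem mul (hσ : IsTranslationVector σ m) (hτ : IsTranslationVector τ m') :
    IsTranslationVector (σ * τ) (m + m') := by
  rw [iff_eventually] at *
  filter_upwards [hτ, τ.injective.tendsto_cofinite.eventually hσ] with p ⟨hτ₁, hτ₂⟩ ⟨hσ₁, hσ₂⟩
  rw [Equiv.Perm.mul_apply, hσ₁, hσ₂, hτ₂, hτ₁, Pi.add_apply]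
  exact ⟨rfl, by ring⟩

theorem inv (h : IsTranslationVector σ m) : IsTranslationVector σ⁻¹ (-m) := by
  rw [iff_eventually] at *
  filter_upwards [σ⁻¹.injective.tendsto_cofinite.eventually h] with p ⟨h₁, h₂⟩
  simp only [Equiv.Perm.coe_inv, Equiv.apply_symm_apply] at h₁ h₂ ⊢
  rw [← h₁] at h₂
  exact ⟨h₁.symm, by simp only [Pi.neg_apply]; omega⟩

theorem zero_iff : IsTranslationVector σ 0 ↔ {p | σ p ≠ p}.Finite := by
  simp [iff_eventually, eventually_cofinite, Prod.ext_iff]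

theorem exists_mapsTo_lowerBox (h : IsTranslationVector σ m) :
    ∃ N : ℤ, ∀ c : Fin n → ℤ, (∀ i, N ≤ c i) → Set.MapsTo σ (lowerBox c) (lowerBox (c + m)) := by
  obtain ⟨F, hF⟩ := h
  obtain ⟨N, hN⟩ := (F.image fun p => ((σ p).2 : ℤ) - m (σ p).1).bddAbove
  refine ⟨N + 1, fun c hc p hp => ?_⟩
  rw [mem_coe, mem_lowerBox] at hp ⊢
  by_cases hpF : p ∈ F
  · have := hN (mem_image_of_mem _ hpF)
    have := hc (σ p).1
    simp only [Pi.add_apply]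
    omega
  · obtain ⟨h₁, h₂⟩ := hF p hpF
    simp only [Pi.add_apply, h₁]
    omega

theorem sum_eq_zero (h : IsTranslationVector σ m) : ∑ i, m i = 0 := by
  obtain ⟨N, hN⟩ := h.exists_mapsTo_lowerBox
  obtain ⟨N', hN'⟩ := h.inv.exists_mapsTo_lowerBox
  obtain ⟨K, hKN, hK⟩ := ((eventually_ge_atTop (max N 0)).and
    (eventually_all.2 fun i => eventually_ge_atTop (max N' 0 - m i))).exists
  set c : Fin n → ℤ := fun _ => K
  have hc₀ (i : Fin n) : 0 ≤ c i := le_of_max_le_right hKN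
  have hcm₀ (i : Fin n) : N' ≤ c i + m i ∧ 0 ≤ c i + m i := by
    have := hK i
    simp only [c]
    omega
  have hσ := hN c fun _ => le_of_max_le_left hKN
  have hσ' := hN' (c + m) fun i => (hcm₀ i).1
  rw [add_neg_cancel_right] at hσ'
  have hcard : #(lowerBox c) = #(lowerBox (c + m)) :=
    (card_le_card_of_injOn σ hσ σ.injective.injOn).antisymm
      (card_le_card_of_injOn (⇑σ⁻¹) hσ' σ⁻¹.injective.injOn)
  zify [card_lowerBox] at hcard
  simp only [Int.toNat_of_nonneg, hc₀, (hcm₀ _).2, Pi.add_apply, sum_add_distrib] at hcard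
  linarith

end IsTranslationVector

def rayShift {n : ℕ} (i j : Fin n) (hij : i ≠ j) : Equiv.Perm (Fin n × ℕ) where
  toFun p := if p.1 = j then (if p.2 = 0 then (i, 0) else (j, p.2 - 1))
    else if p.1 = i then (i, p.2 + 1) else p
  invFun p := if p.1 = i then (if p.2 = 0 then (j, 0) else (i, p.2 - 1))
    else if p.1 = j then (j, p.2 + 1) else p
  left_inv := by
    rintro ⟨k, _ | l⟩ <;> by_cases hkj : k = j <;> by_cases hki : k = i <;> simp_all [hij.symm]
  right_inv := by
    rintro ⟨k, _ | l⟩ <;> by_cases hkj : k = j <;> by_cases hki : k = i <;> simp_all [hij.symm]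

theorem isTranslationVector_rayShift {n : ℕ} (i j : Fin n) (hij : i ≠ j) :
    IsTranslationVector (rayShift i j hij) (Pi.single i 1 - Pi.single j 1) := by
  refine ⟨{(j, 0)}, ?_⟩
  rintro ⟨k, l⟩ hp
  by_cases hkj : k = j <;> by_cases hki : k = i <;> simp_all [rayShift]
  omega

def translationVectors (n : ℕ) : AddSubgroup (Fin n → ℤ) where
  carrier := {m | ∃ σ, IsTranslationVector σ m}
  zero_mem' := ⟨1, .one⟩
  add_mem' := fun ⟨σ, hσ⟩ ⟨τ, hτ⟩ => ⟨σ * τ, hσ.mul hτ⟩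
  neg_mem' := fun ⟨σ, hσ⟩ => ⟨σ⁻¹, hσ.inv⟩

theorem single_sub_single_mem_translationVectors {n : ℕ} (i j : Fin n) :
    Pi.single i 1 - Pi.single j 1 ∈ translationVectors n := by
  obtain rfl | hij := eq_or_ne i j
  · simp [(translationVectors n).zero_mem]
  · exact ⟨_, isTranslationVector_rayShift i j hij⟩

theorem mem_translationVectors_of_sum_eq_zero {n : ℕ} {v : Fin n → ℤ} (hv : ∑ i, v i = 0) :
    v ∈ translationVectors n := by
  rcases isEmpty_or_nonempty (Fin n) with _ | ⟨⟨j⟩⟩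
  · exact Subsingleton.elim 0 v ▸ (translationVectors n).zero_mem
  · rw [← sum_smul_single_sub_single v hv j]
    exact sum_mem fun i _ => zsmul_mem (single_sub_single_mem_translationVectors i j) _

namespace HoughtonGroup

variable {n : ℕ}

theorem mem_iff {σ : Equiv.Perm (Fin n × ℕ)} :
    σ ∈ HoughtonGroup n ↔ ∃ m, IsTranslationVector σ m :=
  Iff.rfl

noncomputable def translationVector (σ : HoughtonGroup n) : Fin n → ℤ :=
  (mem_iff.1 σ.2).choose

theorem isTranslationVector_translationVector (σ : HoughtonGroup n) :
    IsTranslationVector σ (translationVector σ) :=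
  (mem_iff.1 σ.2).choose_spec

theorem translationVector_eq_iff {σ : HoughtonGroup n} {m : Fin n → ℤ} :
    translationVector σ = m ↔ IsTranslationVector σ m :=
  ⟨fun h => h ▸ isTranslationVector_translationVector σ,
    (isTranslationVector_translationVector σ).unique⟩

end HoughtonGroup

theorem houghton_translation_homomorphism_general (n : ℕ) :
    ∃ T : HoughtonGroup n → (Fin n → ℤ),
      (∀ σ : HoughtonGroup n,
        IsTranslationVector (σ : Equiv.Perm (Fin n × ℕ)) (T σ) ∧
        ∀ m : Fin n → ℤ, IsTranslationVector (σ : Equiv.Perm (Fin n × ℕ)) m → m = T σ) ∧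
      (∀ σ : HoughtonGroup n, ∑ i, T σ i = 0) ∧
      (∀ σ τ : HoughtonGroup n, T (σ * τ) = T σ + T τ) ∧
      (∀ σ : HoughtonGroup n,
        (T σ = 0 ↔ {x : Fin n × ℕ | (σ : Equiv.Perm (Fin n × ℕ)) x ≠ x}.Finite)) ∧
      Set.range T = {v : Fin n → ℤ | ∑ i, v i = 0} := by
  have hT := HoughtonGroup.isTranslationVector_translationVector (n := n)
  have hT_eq {σ : HoughtonGroup n} {m} := HoughtonGroup.translationVector_eq_iff (σ := σ) (m := m)
  refine ⟨HoughtonGroup.translationVector, fun σ => ⟨hT σ, fun m hm => hm.unique (hT σ)⟩,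
    fun σ => (hT σ).sum_eq_zero, fun σ τ => hT_eq.2 ((hT σ).mul (hT τ)),
    fun σ => hT_eq.trans IsTranslationVector.zero_iff, Set.Subset.antisymm ?_ fun v hv => ?_⟩
  · rintro _ ⟨σ, rfl⟩
    exact (hT σ).sum_eq_zero
  · obtain ⟨σ, hσ⟩ := mem_translationVectors_of_sum_eq_zero hv
    exact ⟨⟨σ, v, hσ⟩, hT_eq.2 hσ⟩

/-- For every element `σ` of the Houghton group `H_n` (`n ≥ 1`) there is a unique vector
`(m₁(σ), …, m_n(σ)) ∈ ℤ^n` of eventual translation amounts; these sum to zero; the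
resulting map `T : H_n → ℤ^n` is a group homomorphism, its kernel consists exactly of the
finitely supported elements of `H_n`, and its image is exactly the zero-sum sublattice
`{v ∈ ℤ^n : v₁ + ⋯ + v_n = 0}`. -/
theorem houghton_translation_homomorphism (n : ℕ) (hn : 1 ≤ n) :
    ∃ T : HoughtonGroup n → (Fin n → ℤ),
      (∀ σ : HoughtonGroup n,
        IsTranslationVector (σ : Equiv.Perm (Fin n × ℕ)) (T σ) ∧
        ∀ m : Fin n → ℤ, IsTranslationVector (σ : Equiv.Perm (Fin n × ℕ)) m → m = T σ) ∧
      (∀ σ : HoughtonGroup n, ∑ i, T σ i = 0) ∧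
      (∀ σ τ : HoughtonGroup n, T (σ * τ) = T σ + T τ) ∧
      (∀ σ : HoughtonGroup n,
        (T σ = 0 ↔ {x : Fin n × ℕ | (σ : Equiv.Perm (Fin n × ℕ)) x ≠ x}.Finite)) ∧
      Set.range T = {v : Fin n → ℤ | ∑ i, v i = 0} :=
  houghton_translation_homomorphism_general n
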